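/- If m = p₁^{α₁}⋯p_ℓ^{α_ℓ} is the prime factorization of m, then the number of sublattices of index m in ℤⁿ equals ∏_{i=1}^{ℓ} ∏_{j=1}^{α_i} (p_i^{j+n-1} − 1)/(p_i^j − 1). -/

import Mathlib

/-!
Write `sₙ(m)` for the number of subgroups of index `m` of `ℤⁿ`. In `ℤ × ℤⁿ`, a subgroup `K` of
finite index is determined by `H = K ∩ ℤⁿ`, the index `d` of its projection to the first factor,
and the coset modulo `H` of the second component of any element of `K` over `d`; conversely every
such triple occurs, and `[ℤ × ℤⁿ : K] = [ℤⁿ : H] · d`. Hence `sₙ₊₁(m) = ∑_{e ∣ m} e · sₙ(e)`, i.e.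
`sₙ₊₁ = (id · sₙ) * ζ` as arithmetic functions. So every `sₙ` is multiplicative, and at a prime
power the recursion is the `q`-Pascal identity `∑_{i ≤ a} pⁱ [n+i-1, i]_p = [n+a, a]_p` for
Gaussian binomial coefficients.
-/

/-- `subCount n m` is the number of sublattices (subgroups) of `ℤⁿ` of index `m`. -/
noncomputable def subCount (n m : ℕ) : ℕ :=
  Nat.card {H : AddSubgroup (Fin n → ℤ) // H.index = m}

open AddSubgroup Finset

theorem Nat.div_ne_zero_of_mem_divisors {m e : ℕ} (he : e ∈ m.divisors) : m / e ≠ 0 :=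
  (Nat.div_pos (Nat.divisor_le he) (Nat.pos_of_mem_divisors he)).ne'

theorem Nat.card_addSubgroup_index_congr {G G' : Type*} [AddGroup G] [AddGroup G'] (e : G ≃+ G')
    (m : ℕ) :
    Nat.card {H : AddSubgroup G // H.index = m} = Nat.card {H : AddSubgroup G' // H.index = m} :=
  Nat.card_congr <| e.mapAddSubgroup.toEquiv.subtypeEquiv fun H => by
    simp [AddEquiv.mapAddSubgroup, AddSubgroup.index_map_equiv]

theorem AddSubgroup.index_eq_index_comap_inr_mul_index_map_fst {B A : Type*} [AddCommGroup B]
    [AddCommGroup A] (H : AddSubgroup (B × A)) :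
    H.index = (H.comap (AddMonoidHom.inr B A)).index * (H.map (AddMonoidHom.fst B A)).index := by
  have hker : (AddMonoidHom.fst B A).ker = (⊤ : AddSubgroup A).map (AddMonoidHom.inr B A) := by
    ext ⟨b, a⟩; simp [eq_comm, mem_prod]
  rw [← relIndex_mul_index (le_sup_left : H ≤ H ⊔ (AddMonoidHom.fst B A).ker), relIndex_sup_left,
    ← comap_map_eq, index_comap_of_surjective _ Prod.fst_surjective, hker, ← relIndex_comap,
    relIndex_top_right]

theorem AddSubgroup.finite_subtype_index_eq {M : Type*} [AddCommGroup M] [Module.Free ℤ M]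
    [Module.Finite ℤ M] {m : ℕ} (hm : m ≠ 0) : Finite {H : AddSubgroup M // H.index = m} := by
  set K := (nsmulAddMonoidHom (α := M) m).range
  have : K.FiniteIndex := ⟨by rw [index_range_nsmul]; exact pow_ne_zero _ hm⟩
  have hK (H : {H : AddSubgroup M // H.index = m}) :
      comap (QuotientAddGroup.mk' K) (map (QuotientAddGroup.mk' K) H.1) = H.1 := by
    refine comap_map_eq_self ?_
    rw [QuotientAddGroup.ker_mk']
    obtain ⟨H, rfl⟩ := H
    rintro _ ⟨x, rfl⟩
    exact H.nsmul_index_mem x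
  exact Finite.of_injective (fun H => H.1.map (QuotientAddGroup.mk' K)) fun H₁ H₂ h =>
    Subtype.ext <| by rw [← hK H₁, ← hK H₂]; exact congrArg _ h

namespace AddSubgroup

variable {A : Type*} [AddCommGroup A]

def extendByInt (H : AddSubgroup A) (d : ℕ) (c : A ⧸ H) : AddSubgroup (ℤ × A) where
  carrier := {x | ∃ k : ℤ, x.1 = k * d ∧ (x.2 : A ⧸ H) = k • c}
  zero_mem' := ⟨0, by simp⟩
  add_mem' := by
    rintro _ _ ⟨k, hk₁, hk₂⟩ ⟨l, hl₁, hl₂⟩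
    exact ⟨k + l, by simp [hk₁, hl₁, add_mul], by simp [hk₂, hl₂, add_zsmul]⟩
  neg_mem' := by
    rintro _ ⟨k, hk₁, hk₂⟩
    exact ⟨-k, by simp [hk₁], by simp [hk₂]⟩

variable {H : AddSubgroup A} {d : ℕ} {c : A ⧸ H}

theorem mem_extendByInt {x : ℤ × A} :
    x ∈ H.extendByInt d c ↔ ∃ k : ℤ, x.1 = k * d ∧ (x.2 : A ⧸ H) = k • c := Iff.rfl

theorem comap_inr_extendByInt (hd : d ≠ 0) :
    (H.extendByInt d c).comap (AddMonoidHom.inr ℤ A) = H := by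
  ext a
  simp only [mem_comap, AddMonoidHom.inr_apply, mem_extendByInt]
  constructor
  · rintro ⟨k, hk, ha⟩
    obtain rfl : k = 0 := by simpa [hd] using hk.symm
    simpa using ha
  · intro ha
    exact ⟨0, by simp, by simpa⟩

theorem map_fst_extendByInt :
    (H.extendByInt d c).map (AddMonoidHom.fst ℤ A) = zmultiples (d : ℤ) := by
  ext t
  simp only [mem_map, mem_zmultiples_iff, AddMonoidHom.coe_fst, smul_eq_mul]
  constructor
  · rintro ⟨x, ⟨k, hk, -⟩, rfl⟩
    exact ⟨k, hk.symm⟩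
  · rintro ⟨k, rfl⟩
    obtain ⟨a, ha⟩ := QuotientAddGroup.mk_surjective (k • c)
    exact ⟨(k * d, a), ⟨k, rfl, ha⟩, rfl⟩

theorem index_extendByInt (hd : d ≠ 0) : (H.extendByInt d c).index = H.index * d := by
  rw [index_eq_index_comap_inr_mul_index_map_fst, comap_inr_extendByInt hd, map_fst_extendByInt,
    Int.index_zmultiples, Int.natAbs_natCast]

theorem extendByInt_injective (hd : d ≠ 0) : Function.Injective (H.extendByInt d) := by
  intro c₁ c₂ h
  obtain ⟨a, rfl⟩ := QuotientAddGroup.mk_surjective c₁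
  have ha : ((d : ℤ), a) ∈ H.extendByInt d a := ⟨1, by simp, by simp⟩
  obtain ⟨k, hk, ha⟩ := (h ▸ ha : ((d : ℤ), a) ∈ H.extendByInt d c₂)
  obtain rfl : k = 1 := by simpa [hd] using (one_mul (d : ℤ)).trans hk
  simpa using ha

theorem eq_extendByInt (K : AddSubgroup (ℤ × A)) :
    ∃ c, K =
      (K.comap (AddMonoidHom.inr ℤ A)).extendByInt (K.map (AddMonoidHom.fst ℤ A)).index c := by
  set d := (K.map (AddMonoidHom.fst ℤ A)).index
  have hd : K.map (AddMonoidHom.fst ℤ A) = zmultiples (d : ℤ) := by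
    obtain ⟨g, hg⟩ := Int.subgroup_cyclic (K.map (AddMonoidHom.fst ℤ A))
    rw [← zmultiples_eq_closure] at hg
    simp only [d, hg, Int.index_zmultiples, Int.zmultiples_natAbs]
  obtain ⟨⟨_, a₀⟩, ha₀, rfl⟩ : (d : ℤ) ∈ K.map (AddMonoidHom.fst ℤ A) := hd ▸ mem_zmultiples _
  refine ⟨a₀, ?_⟩
  have key (k : ℤ) (a : A) : (k * d, a) ∈ K ↔ a - k • a₀ ∈ K.comap (AddMonoidHom.inr ℤ A) := by
    have : ((k * d, a) : ℤ × A) = AddMonoidHom.inr ℤ A (a - k • a₀) + k • ((d : ℤ), a₀) := by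
      ext <;> simp
    rw [mem_comap, this, add_mem_cancel_right (zsmul_mem ha₀ k)]
  ext ⟨t, a⟩
  rw [mem_extendByInt]
  constructor
  · intro hta
    obtain ⟨k, rfl⟩ : ∃ k : ℤ, k * d = t := by
      simpa [hd, mem_zmultiples_iff, mul_comm] using mem_map_of_mem (AddMonoidHom.fst ℤ A) hta
    refine ⟨k, rfl, ?_⟩
    rw [← QuotientAddGroup.mk_zsmul, QuotientAddGroup.eq_iff_sub_mem]
    exact (key k a).1 hta
  · rintro ⟨k, rfl, ha⟩
    rw [← QuotientAddGroup.mk_zsmul, QuotientAddGroup.eq_iff_sub_mem] at ha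
    exact (key k a).2 ha

variable (A) in
noncomputable def extendByIntSigma (m : ℕ) :
    (Σ e : m.divisors, Σ H : {H : AddSubgroup A // H.index = e}, A ⧸ H.1) →
      {K : AddSubgroup (ℤ × A) // K.index = m} :=
  fun ⟨e, H, c⟩ => ⟨H.1.extendByInt (m / e) c, by
    rw [index_extendByInt (Nat.div_ne_zero_of_mem_divisors e.2), H.2,
      Nat.mul_div_cancel' (Nat.dvd_of_mem_divisors e.2)]⟩

theorem extendByIntSigma_bijective {m : ℕ} (hm : m ≠ 0) :
    Function.Bijective (extendByIntSigma A m) := by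
  constructor
  · rintro ⟨⟨e₁, he₁⟩, ⟨H₁, hH₁⟩, c₁⟩ ⟨⟨e₂, he₂⟩, ⟨H₂, hH₂⟩, c₂⟩ h
    cases hH₁; cases hH₂
    have hK : H₁.extendByInt (m / H₁.index) c₁ = H₂.extendByInt (m / H₂.index) c₂ :=
      congrArg Subtype.val h
    obtain rfl : H₁ = H₂ := (comap_inr_extendByInt (Nat.div_ne_zero_of_mem_divisors he₁)).symm.trans
      (hK ▸ comap_inr_extendByInt (Nat.div_ne_zero_of_mem_divisors he₂))
    obtain rfl := extendByInt_injective (Nat.div_ne_zero_of_mem_divisors he₁) hK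
    rfl
  · rintro ⟨K, hK⟩
    obtain ⟨c, hc⟩ := eq_extendByInt K
    have hidx := hK ▸ index_eq_index_comap_inr_mul_index_map_fst K
    refine ⟨⟨⟨_, Nat.mem_divisors.2 ⟨Dvd.intro _ hidx.symm, hm⟩⟩, ⟨_, rfl⟩, c⟩, Subtype.ext ?_⟩
    have hpos : 0 < (K.comap (AddMonoidHom.inr ℤ A)).index :=
      Nat.pos_of_ne_zero fun h => hm (by rw [hidx, h, zero_mul])
    show (K.comap _).extendByInt (m / (K.comap _).index) c = K
    rw [hidx, Nat.mul_div_cancel_left _ hpos, ← hc]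

theorem card_index_eq_sum_divisors [Module.Free ℤ A] [Module.Finite ℤ A] {m : ℕ} (hm : m ≠ 0) :
    Nat.card {K : AddSubgroup (ℤ × A) // K.index = m} =
      ∑ e ∈ m.divisors, e * Nat.card {H : AddSubgroup A // H.index = e} := by
  have (e : m.divisors) : Finite {H : AddSubgroup A // H.index = e} :=
    finite_subtype_index_eq (Nat.pos_of_mem_divisors e.2).ne'
  have (e : m.divisors) (H : {H : AddSubgroup A // H.index = e}) : Finite (A ⧸ H.1) :=
    Nat.finite_of_card_ne_zero (H.2.trans_ne (Nat.pos_of_mem_divisors e.2).ne')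
  rw [← Nat.card_congr (Equiv.ofBijective _ (extendByIntSigma_bijective hm)), Nat.card_sigma,
    ← Finset.sum_coe_sort m.divisors]
  refine Finset.sum_congr rfl fun e _ => ?_
  have := Fintype.ofFinite {H : AddSubgroup A // H.index = e}
  simp only [Nat.card_sigma, ← index_eq_card]
  rw [Finset.sum_congr rfl fun H _ => H.2, Finset.sum_const, Finset.card_univ,
    Nat.card_eq_fintype_card, smul_eq_mul, mul_comm]

end AddSubgroup

section QMultichoose

variable {K : Type*} [Field K]

/-- The Gaussian binomial `[n + a - 1, a]_q`, the `q`-analogue of `Nat.multichoose n a`. -/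
def qMultichoose (q : K) (n a : ℕ) : K :=
  ∏ j ∈ Icc 1 a, (q ^ (j + n - 1) - 1) / (q ^ j - 1)

variable (q : K) (n a : ℕ)

@[simp] theorem qMultichoose_zero_right : qMultichoose q n 0 = 1 := by simp [qMultichoose]

@[simp] theorem qMultichoose_zero_succ : qMultichoose q 0 (a + 1) = 0 :=
  prod_eq_zero (i := 1) (by simp) (by simp)

theorem qMultichoose_succ_right :
    qMultichoose q n (a + 1) = qMultichoose q n a * ((q ^ (a + n) - 1) / (q ^ (a + 1) - 1)) := by
  rw [qMultichoose, prod_Icc_succ_top (by omega), add_right_comm, Nat.add_sub_cancel]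
  rfl

theorem qMultichoose_succ_eq_mul_succ_left :
    qMultichoose q n (a + 1) = (q ^ n - 1) / (q ^ (a + 1) - 1) * qMultichoose q (n + 1) a := by
  induction a with
  | zero => simp [qMultichoose]
  | succ a ih =>
    rw [qMultichoose_succ_right, ih, qMultichoose_succ_right, add_assoc a 1 n, add_comm 1 n]
    ring

theorem qMultichoose_succ_succ (hq : ¬IsOfFinOrder q) :
    qMultichoose q (n + 1) (a + 1) =
      qMultichoose q (n + 1) a + q ^ (a + 1) * qMultichoose q n (a + 1) := by
  have : q ^ (a + 1) - 1 ≠ 0 :=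
    sub_ne_zero.2 fun h => hq (isOfFinOrder_iff_pow_eq_one.2 ⟨a + 1, a.succ_pos, h⟩)
  rw [qMultichoose_succ_right, qMultichoose_succ_eq_mul_succ_left]
  field_simp
  ring

theorem sum_pow_mul_qMultichoose (hq : ¬IsOfFinOrder q) :
    ∑ i ∈ range (a + 1), q ^ i * qMultichoose q n i = qMultichoose q (n + 1) a := by
  induction a with
  | zero => simp
  | succ a ih => rw [sum_range_succ, ih, qMultichoose_succ_succ q n a hq]

end QMultichoose

theorem subCount_zero (m : ℕ) : subCount 0 m = if m = 1 then 1 else 0 := by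
  have hall (H : AddSubgroup (Fin 0 → ℤ)) : H = ⊤ := Subsingleton.elim _ _
  split_ifs with hm
  · subst hm
    exact Nat.card_eq_one_iff_unique.2
      ⟨⟨fun H₁ H₂ => Subtype.ext ((hall _).trans (hall _).symm)⟩, ⟨⟨⊤, index_top⟩⟩⟩
  · exact Nat.card_eq_zero.2 (Or.inl ⟨fun H => hm (H.2 ▸ index_eq_one.2 (hall _))⟩)

theorem subCount_succ (n : ℕ) {m : ℕ} (hm : m ≠ 0) :
    subCount (n + 1) m = ∑ e ∈ m.divisors, e * subCount n e := by
  rw [subCount, Nat.card_addSubgroup_index_congr (Fin.consLinearEquiv ℤ fun _ => ℤ).toAddEquiv.symm]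
  exact AddSubgroup.card_index_eq_sum_divisors hm

open ArithmeticFunction
open scoped ArithmeticFunction.zeta

/-- `subCount n 0` counts the subgroups of infinite index, so it is replaced by `0` here. -/
noncomputable def sublatticeCount (n : ℕ) : ArithmeticFunction ℕ :=
  ⟨fun m => if m = 0 then 0 else subCount n m, if_pos rfl⟩

theorem sublatticeCount_apply (n : ℕ) {m : ℕ} (hm : m ≠ 0) : sublatticeCount n m = subCount n m :=
  if_neg hm

theorem sublatticeCount_zero : sublatticeCount 0 = 1 := by
  ext m
  rcases eq_or_ne m 0 with rfl | hm
  · simp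
  · rw [sublatticeCount_apply 0 hm, subCount_zero, one_apply]

theorem sublatticeCount_succ (n : ℕ) :
    sublatticeCount (n + 1) = (ArithmeticFunction.id.pmul (sublatticeCount n)) * ζ := by
  ext m
  rcases eq_or_ne m 0 with rfl | hm
  · simp
  rw [sublatticeCount_apply _ hm, subCount_succ n hm, mul_zeta_apply]
  refine Finset.sum_congr rfl fun e he => ?_
  rw [pmul_apply, id_apply, sublatticeCount_apply _ (Nat.pos_of_mem_divisors he).ne']

theorem isMultiplicative_sublatticeCount (n : ℕ) : (sublatticeCount n).IsMultiplicative := by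
  induction n with
  | zero => rw [sublatticeCount_zero]; exact isMultiplicative_one
  | succ n ih =>
    rw [sublatticeCount_succ]
    exact (isMultiplicative_id.pmul ih).mul isMultiplicative_zeta

theorem sublatticeCount_prime_pow (n : ℕ) {p : ℕ} (hp : p.Prime) (a : ℕ) :
    (sublatticeCount n (p ^ a) : ℚ) = qMultichoose (p : ℚ) n a := by
  have hq : ¬IsOfFinOrder (p : ℚ) := fun h =>
    hp.one_lt.ne' (by exact_mod_cast h.eq_one (Nat.cast_nonneg p))
  induction n generalizing a with
  | zero => cases a <;> simp [sublatticeCount_zero, one_apply, hp.one_lt.ne']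
  | succ n ih =>
    rw [sublatticeCount_succ, mul_zeta_apply, Nat.sum_divisors_prime_pow hp,
      ← sum_pow_mul_qMultichoose _ _ _ hq]
    push_cast
    refine Finset.sum_congr rfl fun i _ => ?_
    rw [pmul_apply, id_apply, Nat.cast_mul, ih, Nat.cast_pow]

theorem subCount_eq_prod_general (n m : ℕ) (ℓ : ℕ)
    (p α : Fin ℓ → ℕ) (hp : ∀ i, (p i).Prime) (hinj : Function.Injective p)
    (hfact : m = ∏ i, p i ^ α i) :
    (subCount n m : ℚ) =
      ∏ i : Fin ℓ, ∏ j ∈ Finset.Icc 1 (α i),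
        ((p i : ℚ) ^ (j + n - 1) - 1) / ((p i : ℚ) ^ j - 1) := by
  have hm : m ≠ 0 := hfact ▸ prod_ne_zero_iff.2 fun i _ => pow_ne_zero _ (hp i).ne_zero
  rw [← sublatticeCount_apply n hm, hfact, (isMultiplicative_sublatticeCount n).map_prod _ _
    fun i _ j _ hij => Nat.Coprime.pow _ _ ((Nat.coprime_primes (hp i) (hp j)).2 (hinj.ne hij))]
  push_cast
  exact prod_congr rfl fun i _ => sublatticeCount_prime_pow n (hp i) (α i)

/-- Gruber's formula: if `m = ∏ pᵢ^{αᵢ}`, then the number of sublattices of `ℤⁿ`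
of index `m` equals `∏ᵢ ∏_{j=1}^{αᵢ} (pᵢ^{j+n-1} − 1)/(pᵢ^j − 1)`. -/
theorem subCount_eq_prod (n m : ℕ) (hm : 1 ≤ m) (ℓ : ℕ)
    (p α : Fin ℓ → ℕ) (hp : ∀ i, (p i).Prime) (hinj : Function.Injective p)
    (hα : ∀ i, 1 ≤ α i) (hfact : m = ∏ i, p i ^ α i) :
    (subCount n m : ℚ) =
      ∏ i : Fin ℓ, ∏ j ∈ Finset.Icc 1 (α i),
        ((p i : ℚ) ^ (j + n - 1) - 1) / ((p i : ℚ) ^ j - 1) :=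
  subCount_eq_prod_general n m ℓ p α hp hinj hfact
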